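/- Let D ⊆ ℝ² be open and let X, Y : D → ℝ be C² functions with Y(u,v) ∈ (−π/2, π/2) for all (u,v) ∈ D. Define K = e^{2X}·cos Y and κ = e^{2X}·sin Y (so K > 0). Then the pair of equations (K² + κ²)^{1/4}·Δ ln (K² + κ²)^{1/8} = K and (K² + κ²)^{1/4}·Δ arctan(κ/K) = 2κ holds on D if and only if the pair of equations Δ X = 2e^{X}·cos Y and Δ Y = 2e^{X}·sin Y holds on D. -/

import Mathlib

/-- Partial derivative with respect to the first variable. -/
noncomputable def pd1 (f : ℝ × ℝ → ℝ) (p : ℝ × ℝ) : ℝ := fderiv ℝ f p (1, 0)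

/-- Partial derivative with respect to the second variable. -/
noncomputable def pd2 (f : ℝ × ℝ → ℝ) (p : ℝ × ℝ) : ℝ := fderiv ℝ f p (0, 1)

/-- The Laplace operator Δ = ∂²/∂u² + ∂²/∂v². -/
noncomputable def lap (f : ℝ × ℝ → ℝ) (p : ℝ × ℝ) : ℝ := pd1 (pd1 f) p + pd2 (pd2 f) p

/-! Under `K = e^{2X} cos Y`, `κ = e^{2X} sin Y` one has `K² + κ² = e^{4X}`, so the prefactor
`(K² + κ²)^{1/4}` is `e^X`, `ln (K² + κ²)^{1/8} = X / 2`, and, because `|Y| < π/2`,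
`arctan (κ / K) = Y`. The natural system thus becomes `e^X Δ X / 2 = e^{2X} cos Y` and
`e^X Δ Y = 2 e^{2X} sin Y`; dividing by `e^X` gives the canonical form. -/

open Filter Topology Real

section Laplacian

variable {f g : ℝ × ℝ → ℝ} {p : ℝ × ℝ}

theorem pd1_const_smul (c : ℝ) (f : ℝ × ℝ → ℝ) : pd1 (c • f) = c • pd1 f := by
  ext q
  simp only [pd1, fderiv_const_smul_field, Pi.smul_apply, smul_apply]

theorem pd2_const_smul (c : ℝ) (f : ℝ × ℝ → ℝ) : pd2 (c • f) = c • pd2 f := by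
  ext q
  simp only [pd2, fderiv_const_smul_field, Pi.smul_apply, smul_apply]

theorem lap_const_smul (c : ℝ) (f : ℝ × ℝ → ℝ) : lap (c • f) = c • lap f := by
  ext q
  simp only [lap, pd1_const_smul, pd2_const_smul, Pi.smul_apply, smul_eq_mul, mul_add]

theorem Filter.EventuallyEq.pd1 (h : f =ᶠ[𝓝 p] g) : pd1 f =ᶠ[𝓝 p] pd1 g :=
  h.fderiv (𝕜 := ℝ) |>.mono fun q hq => by simp only [_root_.pd1, hq]

theorem Filter.EventuallyEq.pd2 (h : f =ᶠ[𝓝 p] g) : pd2 f =ᶠ[𝓝 p] pd2 g :=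
  h.fderiv (𝕜 := ℝ) |>.mono fun q hq => by simp only [_root_.pd2, hq]

theorem Filter.EventuallyEq.lap_eq (h : f =ᶠ[𝓝 p] g) : lap f p = lap g p := by
  simp only [lap, h.pd1.pd1.eq_of_nhds, h.pd2.pd2.eq_of_nhds]

end Laplacian

section Substitution

variable (x y : ℝ)

theorem exp_two_mul_cos_sq_add_sin_sq :
    (exp (2 * x) * cos y) ^ 2 + (exp (2 * x) * sin y) ^ 2 = exp (4 * x) := by
  rw [mul_pow, mul_pow, ← mul_add, cos_sq_add_sin_sq, mul_one, ← exp_nat_mul]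
  ring_nf

theorem exp_rpow_one_div_four : exp (4 * x) ^ ((1 : ℝ) / 4) = exp x := by
  rw [← exp_mul]
  ring_nf

theorem log_exp_rpow_one_div_eight : log (exp (4 * x) ^ ((1 : ℝ) / 8)) = (1 / 2 : ℝ) * x := by
  rw [← exp_mul, log_exp]
  ring

theorem arctan_exp_mul_sin_div_exp_mul_cos (hy : y ∈ Set.Ioo (-(π / 2)) (π / 2)) :
    arctan (exp (2 * x) * sin y / (exp (2 * x) * cos y)) = y := by
  rw [mul_div_mul_left _ _ (exp_ne_zero _), ← tan_eq_sin_div_cos, arctan_tan hy.1 hy.2]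

theorem exp_mul_eq_exp_two_mul_iff (a b : ℝ) : exp x * a = exp (2 * x) * b ↔ a = exp x * b := by
  rw [two_mul, exp_add, mul_assoc, mul_right_inj' (exp_ne_zero x)]

end Substitution

theorem spacelike_natural_system_iff_canonical_form_general
    (D : Set (ℝ × ℝ)) (hD : IsOpen D)
    (X Y : ℝ × ℝ → ℝ)
    (hYrange : ∀ p ∈ D, Y p ∈ Set.Ioo (-(Real.pi / 2)) (Real.pi / 2))
    (K κ : ℝ × ℝ → ℝ)
    (hK : ∀ p, K p = Real.exp (2 * X p) * Real.cos (Y p))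
    (hκ : ∀ p, κ p = Real.exp (2 * X p) * Real.sin (Y p)) :
    ((∀ p ∈ D,
        (K p ^ 2 + κ p ^ 2) ^ ((1 : ℝ) / 4) *
            lap (fun q => Real.log ((K q ^ 2 + κ q ^ 2) ^ ((1 : ℝ) / 8))) p = K p) ∧
      (∀ p ∈ D,
        (K p ^ 2 + κ p ^ 2) ^ ((1 : ℝ) / 4) *
            lap (fun q => Real.arctan (κ q / K q)) p = 2 * κ p)) ↔
    ((∀ p ∈ D, lap X p = 2 * Real.exp (X p) * Real.cos (Y p)) ∧
      (∀ p ∈ D, lap Y p = 2 * Real.exp (X p) * Real.sin (Y p))) := by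
  have hsum (q : ℝ × ℝ) : K q ^ 2 + κ q ^ 2 = exp (4 * X q) := by
    rw [hK, hκ, exp_two_mul_cos_sq_add_sin_sq]
  have hlog : (fun q => log ((K q ^ 2 + κ q ^ 2) ^ ((1 : ℝ) / 8))) = (1 / 2 : ℝ) • X := by
    ext q
    rw [hsum, log_exp_rpow_one_div_eight, Pi.smul_apply, smul_eq_mul]
  have harctan (p : ℝ × ℝ) (hp : p ∈ D) : lap (fun q => arctan (κ q / K q)) p = lap Y p :=
    EventuallyEq.lap_eq <| eventually_of_mem (hD.mem_nhds hp) fun q hq => by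
      dsimp only
      rw [hK, hκ, arctan_exp_mul_sin_div_exp_mul_cos _ _ (hYrange q hq)]
  refine and_congr (forall₂_congr fun p _ => ?_) (forall₂_congr fun p hp => ?_)
  · rw [hsum, exp_rpow_one_div_four, hlog, lap_const_smul, hK, Pi.smul_apply, smul_eq_mul,
      exp_mul_eq_exp_two_mul_iff]
    constructor <;> intro h <;> linarith
  · rw [hsum, exp_rpow_one_div_four, harctan p hp, hκ, mul_left_comm, exp_mul_eq_exp_two_mul_iff]
    ring_nf

theorem spacelike_natural_system_iff_canonical_form
    (D : Set (ℝ × ℝ)) (hD : IsOpen D)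
    (X Y : ℝ × ℝ → ℝ)
    (hX : ContDiffOn ℝ 2 X D) (hY : ContDiffOn ℝ 2 Y D)
    (hYrange : ∀ p ∈ D, Y p ∈ Set.Ioo (-(Real.pi / 2)) (Real.pi / 2))
    (K κ : ℝ × ℝ → ℝ)
    (hK : ∀ p, K p = Real.exp (2 * X p) * Real.cos (Y p))
    (hκ : ∀ p, κ p = Real.exp (2 * X p) * Real.sin (Y p)) :
    ((∀ p ∈ D,
        (K p ^ 2 + κ p ^ 2) ^ ((1 : ℝ) / 4) *
            lap (fun q => Real.log ((K q ^ 2 + κ q ^ 2) ^ ((1 : ℝ) / 8))) p = K p) ∧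
      (∀ p ∈ D,
        (K p ^ 2 + κ p ^ 2) ^ ((1 : ℝ) / 4) *
            lap (fun q => Real.arctan (κ q / K q)) p = 2 * κ p)) ↔
    ((∀ p ∈ D, lap X p = 2 * Real.exp (X p) * Real.cos (Y p)) ∧
      (∀ p ∈ D, lap Y p = 2 * Real.exp (X p) * Real.sin (Y p))) :=
  spacelike_natural_system_iff_canonical_form_general D hD X Y hYrange K κ hK hκ
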